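/- arXiv:2407.02242 — 2 statements merged into one kernel-verified Lean document; each statement's English description precedes it below -/
import Mathlib

section
/- Let y, F, G \in \mathbb{R}^n with L(F+G) < L(F) where L(v) := |y - v|^2. Then 2 (y - F) \cdot (G / |G|) \geq (L(F) - L(F+G)) / (2 \sqrt{L(F)}). -/
open scoped InnerProductSpace

theorem norm_lt_two_mul_norm_of_norm_sub_lt {E : Type*} [SeminormedAddCommGroup E] {r G : E}
    (h : ‖r - G‖ < ‖r‖) : ‖G‖ < 2 * ‖r‖ :=
  calc ‖G‖ = ‖r - (r - G)‖ := by rw [sub_sub_cancel]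
    _ ≤ ‖r‖ + ‖r - G‖ := norm_sub_le _ _
    _ < 2 * ‖r‖ := by linarith

/-- The decrease `‖r‖² - ‖r - G‖² = 2⟪r, G⟫ - ‖G‖²` is at most `2⟪r, G⟫`, and dividing that by
`2‖r‖` rather than by `‖G‖` only makes it smaller because `‖G‖ < 2‖r‖`. -/
theorem sq_norm_sub_sq_norm_sub_div_le_two_mul_inner_normalize {E : Type*}
    [NormedAddCommGroup E] [InnerProductSpace ℝ E] {r G : E} (h : ‖r - G‖ < ‖r‖) :
    (‖r‖ ^ 2 - ‖r - G‖ ^ 2) / (2 * ‖r‖) ≤ 2 * ⟪r, ‖G‖⁻¹ • G⟫_ℝ := by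
  have hG : ‖G‖ < 2 * ‖r‖ := norm_lt_two_mul_norm_of_norm_sub_lt h
  have hdecrease : ‖r‖ ^ 2 - ‖r - G‖ ^ 2 = 2 * ⟪r, G⟫_ℝ - ‖G‖ ^ 2 := by
    rw [norm_sub_sq_real]; ring
  have hsq : ‖r - G‖ ^ 2 < ‖r‖ ^ 2 := pow_lt_pow_left₀ h (norm_nonneg _) two_ne_zero
  have hinner : 0 < ⟪r, G⟫_ℝ := by linarith [sq_nonneg ‖G‖]
  have hGpos : 0 < ‖G‖ := norm_pos_iff.mpr (by rintro rfl; simp at hinner)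
  have hr : 0 < ‖r‖ := by linarith
  calc (‖r‖ ^ 2 - ‖r - G‖ ^ 2) / (2 * ‖r‖) ≤ 2 * ⟪r, G⟫_ℝ / (2 * ‖r‖) := by
        gcongr; linarith [sq_nonneg ‖G‖]
    _ ≤ 2 * ⟪r, G⟫_ℝ / ‖G‖ := div_le_div_of_nonneg_left (by positivity) hGpos hG.le
    _ = 2 * ⟪r, ‖G‖⁻¹ • G⟫_ℝ := by rw [real_inner_smul_right]; ring

theorem stmt_6 (n : ℕ) (y F G : EuclideanSpace ℝ (Fin n))
    (h : ‖y - (F + G)‖ ^ 2 < ‖y - F‖ ^ 2) :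
    2 * ⟪y - F, (1 / ‖G‖) • G⟫_ℝ ≥
      (‖y - F‖ ^ 2 - ‖y - (F + G)‖ ^ 2) / (2 * Real.sqrt (‖y - F‖ ^ 2)) := by
  rw [sub_add_eq_sub_sub] at h ⊢
  rw [Real.sqrt_sq (norm_nonneg _), one_div]
  exact sq_norm_sub_sq_norm_sub_div_le_two_mul_inner_normalize
    (pow_lt_pow_iff_left₀ (norm_nonneg _) (norm_nonneg _) two_ne_zero |>.mp h)
end

section
/- Let y, F_0, F, G \in \mathbb{R}^n with L(v) := |y-v|^2, \frac{\sqrt{5}-1}{2} < \kappa < 1, \mu := (\kappa - \sqrt{1-\kappa})^2. Suppose (y - F) \cdot (F - F_0) = 0, L(F) \leq L(F_0), L(F_0 + G) \leq \mu L(F_0), and L(F) \geq \kappa L(F_0). Then L(F + G) \leq \kappa L(F). -/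
/-!
Write `a = ‖y - F₀‖`. Pythagoras at `F` and the stall hypothesis give
`‖F - F₀‖² = a² - ‖y - F‖² ≤ (1 - κ) a²`, so moving from `F₀ + G` to `F + G` costs at most
`√(1 - κ) a`, and the triangle inequality gives `‖y - (F + G)‖ ≤ (κ - √(1 - κ)) a + √(1 - κ) a = κ a`.
Squaring, `‖y - (F + G)‖² ≤ κ (κ a²) ≤ κ ‖y - F‖²`. The bound `κ > (√5 - 1)/2` means
`κ² + κ - 1 > 0`, i.e. `√(1 - κ) < κ`, so that `κ - √(1 - κ) ≥ 0`.
-/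

open scoped InnerProductSpace

lemma one_sub_lt_sq_of_sqrt_five_sub_one_div_two_lt {κ : ℝ} (hκ : (√5 - 1) / 2 < κ) :
    1 - κ < κ ^ 2 := by
  have h5 : √5 ^ 2 = 5 := Real.sq_sqrt (by norm_num)
  nlinarith [Real.sqrt_nonneg 5, sq_nonneg (2 * κ + 1 - √5)]

lemma sqrt_one_sub_le_of_sqrt_five_sub_one_div_two_lt {κ : ℝ} (hκ : (√5 - 1) / 2 < κ) :
    √(1 - κ) ≤ κ := by
  have hκ0 : 0 < κ := by
    nlinarith [Real.sqrt_nonneg 5, Real.sq_sqrt (show (0 : ℝ) ≤ 5 by norm_num)]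
  exact Real.sqrt_le_iff.2 ⟨hκ0.le, (one_sub_lt_sq_of_sqrt_five_sub_one_div_two_lt hκ).le⟩

lemma le_mul_of_sq_le_sq_mul_sq {u c a : ℝ} (hca : 0 ≤ c * a) (h : u ^ 2 ≤ c ^ 2 * a ^ 2) :
    u ≤ c * a :=
  le_of_pow_le_pow_left₀ two_ne_zero hca (by rwa [mul_pow])

lemma norm_sub_sq_eq_of_inner_sub_sub_eq_zero {E : Type*} [SeminormedAddCommGroup E]
    [InnerProductSpace ℝ E] {y F₀ F : E} (h : ⟪y - F, F - F₀⟫_ℝ = 0) :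
    ‖F - F₀‖ ^ 2 = ‖y - F₀‖ ^ 2 - ‖y - F‖ ^ 2 := by
  have := norm_add_sq_eq_norm_sq_add_norm_sq_real h
  rw [sub_add_sub_cancel] at this
  nlinarith

lemma norm_sub_add_le_norm_sub_add_add_norm_sub {E : Type*} [SeminormedAddCommGroup E]
    (y F₀ F G : E) : ‖y - (F + G)‖ ≤ ‖y - (F₀ + G)‖ + ‖F - F₀‖ := by
  have := norm_sub_le_norm_sub_add_norm_sub (y - G) F₀ F
  rwa [sub_sub, add_comm G, sub_sub, add_comm G, norm_sub_rev F₀] at this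

theorem stmt_13_general (n : ℕ) (y F₀ F G : EuclideanSpace ℝ (Fin n))
    (κ : ℝ) (hκ0 : (Real.sqrt 5 - 1) / 2 < κ) (hκ1 : κ < 1)
    (horth : ⟪y - F, F - F₀⟫_ℝ = 0)
    (hG : ‖y - (F₀ + G)‖ ^ 2 ≤ (κ - Real.sqrt (1 - κ)) ^ 2 * ‖y - F₀‖ ^ 2)
    (hstall : ‖y - F‖ ^ 2 ≥ κ * ‖y - F₀‖ ^ 2) :
    ‖y - (F + G)‖ ^ 2 ≤ κ * ‖y - F‖ ^ 2 := by
  set a := ‖y - F₀‖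
  have hsqrt := sqrt_one_sub_le_of_sqrt_five_sub_one_div_two_lt hκ0
  have hκ : 0 ≤ κ := (Real.sqrt_nonneg _).trans hsqrt
  have hstep : ‖F - F₀‖ ≤ √(1 - κ) * a := by
    refine le_mul_of_sq_le_sq_mul_sq (by positivity) ?_
    rw [norm_sub_sq_eq_of_inner_sub_sub_eq_zero horth, Real.sq_sqrt (by linarith)]
    linarith
  have hG' : ‖y - (F₀ + G)‖ ≤ (κ - √(1 - κ)) * a :=
    le_mul_of_sq_le_sq_mul_sq (mul_nonneg (sub_nonneg.2 hsqrt) (norm_nonneg _)) hG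
  have hFG : ‖y - (F + G)‖ ≤ κ * a :=
    (norm_sub_add_le_norm_sub_add_add_norm_sub y F₀ F G).trans (by linarith)
  calc ‖y - (F + G)‖ ^ 2 ≤ (κ * a) ^ 2 := pow_le_pow_left₀ (norm_nonneg _) hFG 2
    _ = κ * (κ * a ^ 2) := by ring
    _ ≤ κ * ‖y - F‖ ^ 2 := mul_le_mul_of_nonneg_left hstall hκ

theorem stmt_13 (n : ℕ) (y F₀ F G : EuclideanSpace ℝ (Fin n))
    (κ : ℝ) (hκ0 : (Real.sqrt 5 - 1) / 2 < κ) (hκ1 : κ < 1)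
    (horth : ⟪y - F, F - F₀⟫_ℝ = 0)
    (hle : ‖y - F‖ ^ 2 ≤ ‖y - F₀‖ ^ 2)
    (hG : ‖y - (F₀ + G)‖ ^ 2 ≤ (κ - Real.sqrt (1 - κ)) ^ 2 * ‖y - F₀‖ ^ 2)
    (hstall : ‖y - F‖ ^ 2 ≥ κ * ‖y - F₀‖ ^ 2) :
    ‖y - (F + G)‖ ^ 2 ≤ κ * ‖y - F‖ ^ 2 :=
  stmt_13_general n y F₀ F G κ hκ0 hκ1 horth hG hstall
end
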